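/- (Miyasawa/Tweedie identity for the optimal MMSE denoiser.) Let μ be a probability measure on EuclideanSpace ℝ (Fin n), let σ > 0, and let φ(t) = (2πσ²)^(−n/2) · exp(−‖t‖²/(2σ²)). Define p̄(y) = ∫ φ(y − x) dμ(x) and the posterior mean R*(y) = (1/p̄(y)) • ∫ x · φ(y − x) dμ(x). Then for every y, R*(y) − y = σ² • (∇p̄(y) / p̄(y)), i.e., R*(y) = y + σ² • ∇(log ∘ p̄)(y). -/

import Mathlib

/-!
Differentiating `p̄(y) = ∫ φ(y - x) dμ(x)` under the integral sign, using `∇φ(t) = -σ⁻² φ(t) t`,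
gives `∇p̄(y) = σ⁻² (∫ x φ(y - x) dμ(x) - p̄(y) y) = σ⁻² p̄(y) (R*(y) - y)`. Domination is uniform
in `y` because `‖t‖ exp(-‖t‖²/(2σ²)) ≤ σ`, and `p̄ > 0`, so `∇ log p̄ = ∇p̄ / p̄`.
-/

open MeasureTheory InnerProductSpace

theorem Real.mul_exp_neg_sq_div_le {σ : ℝ} (hσ : 0 < σ) (t : ℝ) :
    t * Real.exp (-t ^ 2 / (2 * σ ^ 2)) ≤ σ := by
  have hAMGM : t / σ ≤ t ^ 2 / (2 * σ ^ 2) + 1 := by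
    have : t ^ 2 / (2 * σ ^ 2) + 1 - t / σ = ((t - σ) ^ 2 + σ ^ 2) / (2 * σ ^ 2) := by
      field_simp; ring
    linarith [show 0 ≤ ((t - σ) ^ 2 + σ ^ 2) / (2 * σ ^ 2) by positivity]
  have hexp : t / σ ≤ Real.exp (t ^ 2 / (2 * σ ^ 2)) := hAMGM.trans (Real.add_one_le_exp _)
  rw [neg_div, Real.exp_neg, ← div_eq_mul_inv, div_le_iff₀ (Real.exp_pos _)]
  rwa [div_le_iff₀' hσ] at hexp

section Gradient

variable {E α : Type*} [NormedAddCommGroup E] [InnerProductSpace ℝ E] [CompleteSpace E]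
  [MeasurableSpace α] {μ : Measure α}

theorem HasGradientAt.log {f : E → ℝ} {f' x : E} (hf : HasGradientAt f f' x) (hx : f x ≠ 0) :
    HasGradientAt (fun y => Real.log (f y)) ((f x)⁻¹ • f') x := by
  rw [hasGradientAt_iff_hasFDerivAt, map_smul]
  exact hf.hasFDerivAt.log hx

theorem hasGradientAt_integral_of_dominated {F : E → α → ℝ} {G : E → α → E} {bound : α → ℝ}
    {x₀ : E} (hF_meas : ∀ x, AEStronglyMeasurable (F x) μ) (hF_int : Integrable (F x₀) μ)
    (hG_meas : AEStronglyMeasurable (G x₀) μ) (h_bound : ∀ x a, ‖G x a‖ ≤ bound a)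
    (bound_integrable : Integrable bound μ) (h_diff : ∀ x a, HasGradientAt (F · a) (G x a) x) :
    HasGradientAt (fun x => ∫ a, F x a ∂μ) (∫ a, G x₀ a ∂μ) x₀ := by
  let L : E →L[ℝ] StrongDual ℝ E := (toDual ℝ E).toContinuousLinearEquiv.toContinuousLinearMap
  have hG_int : Integrable (G x₀) μ :=
    bound_integrable.mono' hG_meas (.of_forall (h_bound x₀))
  rw [hasGradientAt_iff_hasFDerivAt]
  have := hasFDerivAt_integral_of_dominated_of_fderiv_le (F' := fun x a => L (G x a))
    Filter.univ_mem (.of_forall hF_meas) hF_int (L.continuous.comp_aestronglyMeasurable hG_meas)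
    (.of_forall fun a x _ => by simpa [L] using h_bound x a) bound_integrable
    (.of_forall fun a x _ => (h_diff x a).hasFDerivAt)
  rwa [L.integral_comp_comm hG_int] at this

end Gradient

section GaussianKernel

variable {E : Type*} [NormedAddCommGroup E] {σ C : ℝ}

noncomputable def gaussianKernel (σ C : ℝ) (t : E) : ℝ :=
  C * Real.exp (-‖t‖ ^ 2 / (2 * σ ^ 2))

@[fun_prop]
theorem continuous_gaussianKernel : Continuous (gaussianKernel σ C : E → ℝ) := by
  unfold gaussianKernel; fun_prop

theorem gaussianKernel_pos (hC : 0 < C) (t : E) : 0 < gaussianKernel σ C t :=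
  mul_pos hC (Real.exp_pos _)

theorem norm_gaussianKernel_le (t : E) : ‖gaussianKernel σ C t‖ ≤ |C| := by
  have : -‖t‖ ^ 2 / (2 * σ ^ 2) ≤ 0 := div_nonpos_of_nonpos_of_nonneg (by simp) (by positivity)
  rw [gaussianKernel, norm_mul, Real.norm_eq_abs, Real.norm_of_nonneg (Real.exp_pos _).le]
  exact mul_le_of_le_one_right (abs_nonneg C) (Real.exp_le_one_iff.2 this)

variable [InnerProductSpace ℝ E]

theorem norm_gaussianKernel_smul_le (hσ : 0 < σ) (t : E) :
    ‖gaussianKernel σ C t • t‖ ≤ |C| * σ := by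
  rw [gaussianKernel, norm_smul, norm_mul, Real.norm_eq_abs, Real.norm_of_nonneg (Real.exp_pos _).le,
    mul_assoc, mul_comm (Real.exp _)]
  exact mul_le_mul_of_nonneg_left (Real.mul_exp_neg_sq_div_le hσ ‖t‖) (abs_nonneg C)

theorem hasGradientAt_gaussianKernel_sub [CompleteSpace E] (x y : E) :
    HasGradientAt (fun y => gaussianKernel σ C (y - x))
      (-(σ ^ 2)⁻¹ • gaussianKernel σ C (y - x) • (y - x)) y := by
  have hfun : gaussianKernel σ C = fun s : E => C * Real.exp (-(2 * σ ^ 2)⁻¹ * ‖s‖ ^ 2) := by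
    ext s; rw [gaussianKernel]; ring_nf
  rw [hasGradientAt_iff_hasFDerivAt, hfun]
  refine (((((hasFDerivAt_id y).sub_const x).norm_sq).const_mul _).exp.const_mul C).congr_fderiv ?_
  ext s
  simp only [mul_inv_rev, id_eq, neg_mul, map_sub, ContinuousLinearMap.comp_id, neg_smul, smul_neg,
    neg_apply, smul_apply, sub_apply, coe_innerSL_apply, nsmul_eq_mul, Nat.cast_ofNat, smul_eq_mul,
    map_neg, map_smul, toDual_apply_apply, neg_inj]
  ring

end GaussianKernel

section SmoothedDensity

variable {E : Type*} [NormedAddCommGroup E] [MeasurableSpace E] [OpensMeasurableSpace E]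
  {μ : Measure E} [IsFiniteMeasure μ] {σ C : ℝ}

theorem integrable_gaussianKernel_sub (y : E) :
    Integrable (fun x => gaussianKernel σ C (y - x)) μ :=
  (integrable_const |C|).mono' (Continuous.aestronglyMeasurable (by fun_prop))
    (.of_forall fun x => norm_gaussianKernel_le (y - x))

theorem integral_gaussianKernel_sub_pos [NeZero μ] (hC : 0 < C) (y : E) :
    0 < ∫ x, gaussianKernel σ C (y - x) ∂μ := by
  rw [integral_pos_iff_support_of_nonneg (fun x => (gaussianKernel_pos hC (y - x)).le)
    (integrable_gaussianKernel_sub y)]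
  simp [Function.support_eq_univ fun x => (gaussianKernel_pos hC (y - x)).ne', NeZero.ne μ]

variable [InnerProductSpace ℝ E] [SecondCountableTopology E]

theorem integrable_gaussianKernel_sub_smul_sub (hσ : 0 < σ) (y : E) :
    Integrable (fun x => gaussianKernel σ C (y - x) • (y - x)) μ :=
  (integrable_const (|C| * σ)).mono' (Continuous.aestronglyMeasurable (by fun_prop))
    (.of_forall fun x => norm_gaussianKernel_smul_le hσ (y - x))

variable [CompleteSpace E]

theorem integral_gaussianKernel_sub_smul (hσ : 0 < σ) (y : E) :
    ∫ x, gaussianKernel σ C (y - x) • x ∂μ =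
      (∫ x, gaussianKernel σ C (y - x) ∂μ) • y - ∫ x, gaussianKernel σ C (y - x) • (y - x) ∂μ := by
  have h (x : E) : gaussianKernel σ C (y - x) • x =
      gaussianKernel σ C (y - x) • y - gaussianKernel σ C (y - x) • (y - x) := by
    rw [← smul_sub, sub_sub_cancel]
  simp_rw [h]
  rw [integral_sub ((integrable_gaussianKernel_sub y).smul_const y)
    (integrable_gaussianKernel_sub_smul_sub hσ y), integral_smul_const]

theorem hasGradientAt_integral_gaussianKernel_sub (hσ : 0 < σ) (y : E) :
    HasGradientAt (fun y => ∫ x, gaussianKernel σ C (y - x) ∂μ)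
      ((σ ^ 2)⁻¹ • ((∫ x, gaussianKernel σ C (y - x) • x ∂μ) -
        (∫ x, gaussianKernel σ C (y - x) ∂μ) • y)) y := by
  have hgrad := hasGradientAt_integral_of_dominated (μ := μ) (x₀ := y)
    (F := fun z x => gaussianKernel σ C (z - x))
    (G := fun z x => -(σ ^ 2)⁻¹ • gaussianKernel σ C (z - x) • (z - x))
    (fun z => Continuous.aestronglyMeasurable (by fun_prop))
    (integrable_gaussianKernel_sub y)
    (Continuous.aestronglyMeasurable (by fun_prop))
    (fun z x => by
      rw [norm_smul, norm_neg, norm_inv, norm_pow, Real.norm_of_nonneg hσ.le]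
      exact mul_le_mul_of_nonneg_left (norm_gaussianKernel_smul_le hσ (z - x)) (by positivity))
    (integrable_const _) (fun z x => hasGradientAt_gaussianKernel_sub x z)
  rwa [integral_gaussianKernel_sub_smul hσ, sub_sub_cancel_left, smul_neg, ← neg_smul,
    ← integral_smul]

end SmoothedDensity

theorem stmt_11 (n : ℕ) (μ : Measure (EuclideanSpace ℝ (Fin n)))
    [IsProbabilityMeasure μ] (σ : ℝ) (hσ : 0 < σ)
    (φ : EuclideanSpace ℝ (Fin n) → ℝ)
    (hφ : ∀ t, φ t = (2 * Real.pi * σ ^ 2) ^ (-(n : ℝ) / 2) *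
        Real.exp (-‖t‖ ^ 2 / (2 * σ ^ 2)))
    (pbar : EuclideanSpace ℝ (Fin n) → ℝ)
    (hp : ∀ y, pbar y = ∫ x, φ (y - x) ∂μ)
    (Rstar : EuclideanSpace ℝ (Fin n) → EuclideanSpace ℝ (Fin n))
    (hR : ∀ y, Rstar y = (pbar y)⁻¹ • ∫ x, φ (y - x) • x ∂μ) :
    ∀ y, Rstar y - y = σ ^ 2 • ((pbar y)⁻¹ • gradient pbar y) ∧
      Rstar y = y + σ ^ 2 • gradient (fun w => Real.log (pbar w)) y := by
  set C := (2 * Real.pi * σ ^ 2) ^ (-(n : ℝ) / 2)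
  have hC : 0 < C := by positivity
  obtain rfl : φ = gaussianKernel σ C := funext hφ
  intro y
  have hpos : 0 < pbar y := hp y ▸ integral_gaussianKernel_sub_pos hC y
  have hgrad := hasGradientAt_integral_gaussianKernel_sub (μ := μ) (C := C) hσ y
  rw [← funext hp, ← hp] at hgrad
  have htweedie : Rstar y - y = σ ^ 2 • ((pbar y)⁻¹ • gradient pbar y) := by
    rw [hR, hgrad.gradient]
    match_scalars <;> field_simp
  refine ⟨htweedie, ?_⟩
  rw [(hgrad.log hpos.ne').gradient, ← hgrad.gradient, ← htweedie, add_sub_cancel]
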